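/- arXiv:1605.07798 — 6 statements merged into one kernel-verified Lean document; each statement's English description precedes it below -/
import Mathlib

section
/- Let A be an abelian group with a partial order ≤ such that for all a,b,c ∈ A: (i) if b ≤ a and c ≤ a then b+c ≤ a, and (ii) if a ≤ b and a ≤ c then a ≤ a+b+c. Then for every a ∈ A, a + a = 0 and 0 ≤ a. -/
/-- An additive poset: an abelian group with a partial order satisfying
(∗): `b ≤ a → c ≤ a → b + c ≤ a` and (∗∗): `a ≤ b → a ≤ c → a ≤ a + b + c`. -/
class AdditivePoset (A : Type*) extends AddCommGroup A, PartialOrder A where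
  add_le_of_le : ∀ a b c : A, b ≤ a → c ≤ a → b + c ≤ a
  le_add_add : ∀ a b c : A, a ≤ b → a ≤ c → a ≤ a + b + c

theorem stmt0 {A : Type*} [AdditivePoset A] (a : A) : a + a = 0 ∧ (0 : A) ≤ a := by
  have h1 : a + a ≤ a := AdditivePoset.add_le_of_le a a a le_rfl le_rfl
  have h2 : a + a + a ≤ a := AdditivePoset.add_le_of_le a (a + a) a h1 le_rfl
  have h3 : a ≤ a + a + a := AdditivePoset.le_add_add a a a le_rfl le_rfl
  have h4 : a + a + a = a := le_antisymm h2 h3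
  have h5 : a + a = 0 := by
    have := congrArg (· + (-a)) h4
    simpa using this
  exact ⟨h5, by rw [← h5]; exact h1⟩
end

section
/- In an additive poset, the relation of independence is symmetric: if a ≤ a+b then b ≤ a+b. -/
lemma AdditivePoset.two_eq_zero {A : Type*} [AdditivePoset A] (a : A) : a + a = 0 := by
  have h2 : a + a ≤ a := AdditivePoset.add_le_of_le a a a le_rfl le_rfl
  have h3 : a ≤ a + a + a := AdditivePoset.le_add_add a a a le_rfl le_rfl
  have h3' : a + a + a ≤ a := AdditivePoset.add_le_of_le a (a + a) a h2 le_rfl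
  have h4 : a + a + a = 0 + a := by rw [zero_add]; exact le_antisymm h3' h3
  exact add_right_cancel h4

theorem stmt3 {A : Type*} [AdditivePoset A] (a b : A) (h : a ≤ a + b) : b ≤ a + b := by
  have key : a + (a + b) ≤ a + b :=
    AdditivePoset.add_le_of_le (a + b) a (a + b) h le_rfl
  have : a + (a + b) = b := by
    rw [← add_assoc, AdditivePoset.two_eq_zero, zero_add]
  rwa [this] at key
end

section
/- Let a be an element of an additive poset A and let A^a be the set of elements of A independent from a (i.e., b with a ≤ a+b). Then A^a is a subgroup of A, and A^a ∩ A_a = {0}, where A_a = {b : b ≤ a}. -/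
/-- In an additive poset, every element has order dividing 2. -/
theorem AdditivePoset.two_nsmul_eq_zero {A : Type*} [AdditivePoset A] (x : A) :
    x + x = 0 := by
  have h1 : x + x ≤ x := AdditivePoset.add_le_of_le x x x le_rfl le_rfl
  have h2 : (x + x) + x ≤ x := AdditivePoset.add_le_of_le x (x + x) x h1 le_rfl
  have h3 : x ≤ x + x + x := AdditivePoset.le_add_add x x x le_rfl le_rfl
  have h4 : x + x + x = x := le_antisymm h2 h3
  have := congrArg (· + (-x)) h4
  simpa [add_assoc] using this

theorem AdditivePoset.zero_le {A : Type*} [AdditivePoset A] (x : A) : (0 : A) ≤ x := by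
  have h1 : x + x ≤ x := AdditivePoset.add_le_of_le x x x le_rfl le_rfl
  rwa [AdditivePoset.two_nsmul_eq_zero] at h1

/-- `A^a = {b | a ≤ a + b}` is a subgroup and meets the tail `A_a` only in `0`. -/
theorem stmt5 {A : Type*} [AdditivePoset A] (a : A) :
    a ≤ a + 0 ∧
    (∀ b c : A, a ≤ a + b → a ≤ a + c → a ≤ a + (b + c)) ∧
    (∀ b : A, a ≤ a + b → a ≤ a + (-b)) ∧
    {b : A | a ≤ a + b} ∩ {b : A | b ≤ a} = {0} := by
  have two := AdditivePoset.two_nsmul_eq_zero (A := A)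
  refine ⟨by simp, ?_, ?_, ?_⟩
  · intro b c hb hc
    have h := AdditivePoset.le_add_add a (a + b) (a + c) hb hc
    have e : a + (a + b) + (a + c) = a + (b + c) := by
      have : a + (a + b) + (a + c) = (a + a) + (a + (b + c)) := by abel
      rw [this, two, zero_add]
    rwa [e] at h
  · intro b hb
    have : -b = b := neg_eq_of_add_eq_zero_left (two b)
    rwa [this]
  · ext b
    simp only [Set.mem_inter_iff, Set.mem_setOf_eq, Set.mem_singleton_iff]
    constructor
    · rintro ⟨h1, h2⟩
      have h3 : b + a ≤ a := AdditivePoset.add_le_of_le a b a h2 le_rfl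
      have h4 : a + b = a := le_antisymm (by rwa [add_comm]) h1
      have := congrArg (· + (-a)) h4
      simpa [add_comm, add_assoc] using this
    · rintro rfl
      exact ⟨by simp, AdditivePoset.zero_le a⟩
end

section
/- Any finite set of pairwise independent nonzero elements of an additive poset is linearly independent over ℤ/2ℤ; equivalently, if b_1, ..., b_n are pairwise independent nonzero elements with b_1 + ... + b_n = 0, then n = 0. -/
/-! Applying (∗∗) to `a ≤ a + x` and `a ≤ a + y` gives `a ≤ a + x + y` once `a + a = 0` is known,
so the set of elements independent of a fixed `a` is closed under addition. If pairwise
independent `b₁, …, bₙ` sum to zero with `n > 0`, then `b₁` is independent of `b₂ + ⋯ + bₙ = b₁`,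
i.e. `b₁ ≤ 0`; since `0 = b₁ + b₁ ≤ b₁` by (∗), this forces `b₁ = 0`. -/

namespace AdditivePoset

variable {A : Type*} [AdditivePoset A]

theorem add_self (a : A) : a + a = 0 := by
  have h₁ : a + a ≤ a := add_le_of_le a a a le_rfl le_rfl
  have h₂ : a + a + (a + a) ≤ a + a := add_le_of_le _ _ _ le_rfl le_rfl
  have h₃ : a + a ≤ a + a + a + a := le_add_add _ _ _ h₁ h₁
  rw [add_assoc (a + a)] at h₃
  have h₄ : a + a + (a + a) = a + a + 0 := by rw [add_zero]; exact le_antisymm h₂ h₃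
  exact add_left_cancel h₄

theorem zero_le_s7 (a : A) : 0 ≤ a := add_self a ▸ add_le_of_le a a a le_rfl le_rfl

theorem le_add_add_of_le_add {a x y : A} (hx : a ≤ a + x) (hy : a ≤ a + y) :
    a ≤ a + (x + y) := by
  have h := le_add_add _ _ _ hx hy
  rwa [show a + (a + x) + (a + y) = a + a + a + (x + y) by abel, add_self, zero_add] at h

theorem le_add_sum {ι : Type*} {a : A} {s : Finset ι} {f : ι → A}
    (hf : ∀ i ∈ s, a ≤ a + f i) : a ≤ a + ∑ i ∈ s, f i :=
  Finset.sum_induction f (fun x => a ≤ a + x) (fun _ _ => le_add_add_of_le_add)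
    (by rw [add_zero]) hf

end AdditivePoset

theorem stmt7 {A : Type*} [AdditivePoset A] (n : ℕ) (b : Fin n → A)
    (hne : ∀ i, b i ≠ 0)
    (hind : ∀ i j, i ≠ j → b i ≤ b i + b j)
    (hsum : ∑ i, b i = 0) : n = 0 := by
  by_contra hn
  obtain ⟨i⟩ : Nonempty (Fin n) := Fin.pos_iff_nonempty.mp (Nat.pos_of_ne_zero hn)
  have hle : b i ≤ b i + ∑ j ∈ Finset.univ.erase i, b j :=
    AdditivePoset.le_add_sum fun j hj => hind i j (Finset.ne_of_mem_erase hj).symm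
  rw [Finset.add_sum_erase _ _ (Finset.mem_univ i), hsum] at hle
  exact hne i (le_antisymm hle (AdditivePoset.zero_le_s7 _))
end

section
/- Let A be an additive poset, a ∈ A, and n ≥ 1. If b_1, ..., b_n are pairwise independent nonzero elements, each independent from a, and we set a_0 = a and a_i = a + b_1 + ... + b_i, then a_0 < a_1 < ... < a_n is a strictly increasing chain in A. -/
namespace AdditivePoset

variable {A : Type*} [AdditivePoset A]

lemma self_add_self (x : A) : x + x = 0 := by
  have h1 : x + x ≤ x := add_le_of_le x x x le_rfl le_rfl
  have h2 : x ≤ x + x + x := le_add_add x x x le_rfl le_rfl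
  have h3 : x + x + x ≤ x := add_le_of_le x (x + x) x h1 le_rfl
  have h4 : x + x + x = x := le_antisymm h3 h2
  have : x + x + x = 0 + x := by rw [h4, zero_add]
  exact add_right_cancel this

lemma sym {x y : A} (h : x ≤ x + y) : y ≤ x + y := by
  have := add_le_of_le (x + y) (x + y) x le_rfl h
  rwa [add_right_comm, self_add_self, zero_add] at this

lemma key {x u v : A} (h1 : x ≤ x + u) (h2 : x ≤ x + v) : x ≤ x + (u + v) := by
  have := le_add_add x (x + u) (x + v) h1 h2
  have e : x + (x + u) + (x + v) = (x + x) + (x + (u + v)) := by abel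
  rwa [e, self_add_self, zero_add] at this

lemma key_sum {ι : Type*} (s : Finset ι) (x : A) (f : ι → A)
    (h : ∀ j ∈ s, x ≤ x + f j) : x ≤ x + ∑ j ∈ s, f j := by
  induction s using Finset.cons_induction with
  | empty => simp
  | cons i s hi ih =>
    rw [Finset.sum_cons]
    exact key (h i (Finset.mem_cons_self i s)) (ih fun j hj => h j (Finset.mem_cons_of_mem hj))

end AdditivePoset

open AdditivePoset

theorem stmt13 {A : Type*} [AdditivePoset A] (a : A) (n : ℕ) (hn : 1 ≤ n)
    (b : Fin n → A)
    (hne : ∀ i, b i ≠ 0)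
    (hind : ∀ i j, i ≠ j → b i ≤ b i + b j)
    (hinda : ∀ i, a ≤ a + b i) :
    StrictMono (fun i : Fin (n + 1) =>
      a + ∑ j ∈ Finset.univ.filter (fun j : Fin n => (j : ℕ) < (i : ℕ)), b j) := by
  rw [Fin.strictMono_iff_lt_succ]
  intro i
  set S := Finset.univ.filter (fun j : Fin n => (j : ℕ) < ((i.castSucc : Fin (n+1)) : ℕ)) with hS
  have hiS : i ∉ S := by simp [hS]
  have hset : Finset.univ.filter (fun j : Fin n => (j : ℕ) < ((i.succ : Fin (n+1)) : ℕ))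
      = insert i S := by
    ext j
    simp only [hS, Finset.mem_filter, Finset.mem_insert, Finset.mem_univ, true_and,
      Fin.coe_castSucc, Fin.val_succ]
    constructor
    · intro h
      rcases Nat.lt_succ_iff_lt_or_eq.mp h with h | h
      · exact Or.inr h
      · exact Or.inl (Fin.ext h)
    · rintro (rfl | h)
      · exact Nat.lt_succ_self _
      · exact Nat.lt_succ_of_lt h
  rw [hset, Finset.sum_insert hiS]
  have h1 : b i ≤ b i + a := by
    have := sym (hinda i)
    rwa [add_comm] at this
  have h2 : b i ≤ b i + ∑ j ∈ S, b j := by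
    refine key_sum S (b i) b fun j hj => hind i j ?_
    rintro rfl
    simp [hS] at hj
  have h3 : b i ≤ b i + (a + ∑ j ∈ S, b j) := key h1 h2
  have h4 : a + ∑ j ∈ S, b j ≤ b i + (a + ∑ j ∈ S, b j) := sym h3
  refine lt_of_le_of_ne ?_ ?_
  · rw [show a + (b i + ∑ j ∈ S, b j) = b i + (a + ∑ j ∈ S, b j) by abel]
    exact h4
  · intro h
    rw [show a + (b i + ∑ j ∈ S, b j) = (a + ∑ j ∈ S, b j) + b i by abel] at h
    exact hne i (left_eq_add.mp h)
end

section
/- An element a of an additive poset A covers an element b ∈ A if and only if a+b is an atom of A and a+b ≤ a. -/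
namespace AdditivePosetAux

variable {A : Type*} [AdditivePoset A]

lemma self_add_self (a : A) : a + a = 0 := by
  have h1 : a + a ≤ a := AdditivePoset.add_le_of_le a a a le_rfl le_rfl
  have h2 : a + a + a ≤ a := AdditivePoset.add_le_of_le a (a + a) a h1 le_rfl
  have h3 : a ≤ a + a + a := AdditivePoset.le_add_add a a a le_rfl le_rfl
  have h4 : a = a + a + a := le_antisymm h3 h2
  have h5 : a + 0 = a + (a + a) := by rw [add_zero, ← add_assoc, ← h4]
  exact ((add_right_inj a).mp h5).symm

lemma cancel (a x : A) : a + (a + x) = x := by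
  rw [← add_assoc, self_add_self, zero_add]

lemma add_le_self {a b : A} (h : b ≤ a) : a + b ≤ a :=
  AdditivePoset.add_le_of_le a a b le_rfl h

/-- Key lemma: if `b ≤ a` and `c ≤ a + b` then `b ≤ a + c`. -/
lemma key {a b c : A} (hba : b ≤ a) (hc : c ≤ a + b) : b ≤ a + c := by
  have hab : a + b ≤ a := add_le_self hba
  have h1 : c + (a + b) ≤ a + b :=
    AdditivePoset.add_le_of_le (a + b) c (a + b) hc le_rfl
  have h2 : c + (a + b) ≤ a := h1.trans hab
  have h3 : c + (a + b) ≤ c + (a + b) + (a + b) + a :=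
    AdditivePoset.le_add_add (c + (a + b)) (a + b) a h1 h2
  have e1 : c + (a + b) + (a + b) + a = a + c := by
    rw [add_assoc c (a + b) (a + b), self_add_self, add_zero, add_comm]
  rw [e1] at h3
  have h4 : c + (a + b) + (a + c) ≤ a + c :=
    AdditivePoset.add_le_of_le (a + c) (c + (a + b)) (a + c) h3 le_rfl
  have e2 : c + (a + b) + (a + c) = b := by
    have e : c + (a + b) + (a + c) = (c + c) + (a + a) + b := by abel
    rw [e, self_add_self, self_add_self, zero_add, zero_add]
  rwa [e2] at h4

end AdditivePosetAux

open AdditivePosetAux in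
/-- `a` covers `b` iff `a + b` is an atom and `a + b ≤ a`. -/
theorem stmt15 {A : Type*} [AdditivePoset A] (a b : A) :
    b ⋖ a ↔ ((a + b ≠ 0 ∧ ∀ c : A, c ≤ a + b → c = 0 ∨ c = a + b) ∧ a + b ≤ a) := by
  constructor
  · intro h
    have hba : b ≤ a := h.1.le
    have hab : a + b ≤ a := add_le_self hba
    refine ⟨⟨?_, ?_⟩, hab⟩
    · intro h0
      have h1 : a + (a + b) = a + 0 := by rw [h0]
      rw [cancel, add_zero] at h1
      exact h.1.ne' h1.symm
    · intro c hc
      have hbac : b ≤ a + c := key hba hc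
      have hca : c ≤ a := hc.trans hab
      have haca : a + c ≤ a := add_le_self hca
      rcases eq_or_lt_of_le hbac with heq | hlt
      · right
        have h1 : a + b = a + (a + c) := by rw [← heq]
        rwa [cancel, eq_comm] at h1
      · left
        rcases eq_or_lt_of_le haca with heq2 | hlt2
        · have h1 : a + c = a + 0 := by rw [add_zero, heq2]
          exact add_left_cancel h1
        · exact absurd hlt2 (h.2 hlt)
  · rintro ⟨⟨hne, hatom⟩, hle⟩
    have hba : b ≤ a := by
      have h1 : a + (a + b) ≤ a := add_le_self hle
      rwa [cancel] at h1
    have hlt : b < a := by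
      refine lt_of_le_of_ne hba fun h0 => hne ?_
      rw [h0, self_add_self]
    refine ⟨hlt, fun x hbx hxa => ?_⟩
    have h1 : a + x ≤ a := add_le_self hxa.le
    have h2 : b ≤ a + (a + x) := by rw [cancel]; exact hbx.le
    have h3 : a + x ≤ a + b := key h1 h2
    rcases hatom (a + x) h3 with h0 | h0
    · have e := cancel a x
      rw [h0, add_zero] at e
      exact hxa.ne' e
    · have : a + (a + x) = a + (a + b) := by rw [h0]
      rw [cancel, cancel] at this
      exact hbx.ne' this
end
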